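/- arXiv:math/0608297 — 2 statements merged into one kernel-verified Lean document; each statement's English description precedes it below -/
import Mathlib

section
/- Let G be a real polynomial with only real zeros and deg G ≥ n ≥ 1, let a₁,…,aₙ > 0 and A > 0. If Pₙ(-iA; x₁,…,xₙ) = 0 and |xₖ| ≤ 1 for k = 1,…,n-1, then |xₙ| > 1, where Pₙ(s; x) = Σ_{S ⊆ {1,…,n}} G(s - Σ_{k∉S} i aₖ + Σ_{ℓ∈S} i a_ℓ)·Π_{ℓ∈S} x_ℓ. -/
/-!
For `a > 0` and `x ∈ ℂ` put `T_{a,x} f (s) = f(s - i a) + x f(s + i a)`. Then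
`Pₙ(s; x) = (T_{aₙ,xₙ} ∘ ⋯ ∘ T_{a₁,x₁}) G (s)`, each operator bringing in one variable.
If all roots of `f` lie in the closed upper half-plane and `Im s < 0`, every root is strictly
closer to `s + i a` than to `s - i a`, so `|f(s + i a)| < |f(s - i a)|` as soon as `f` is
nonconstant; hence `T_{a,x} f (s) = 0` forces `|x| > 1`. Consequently, for `|x| ≤ 1` the operator
`T_{a,x}` keeps all roots in the closed upper half-plane, and it lowers the degree by at most one.
Applying `T_{a₁,x₁}, …, T_{aₙ₋₁,xₙ₋₁}` to `G` (of degree `≥ n`) therefore yields a nonconstant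
polynomial with all roots in the closed upper half-plane, and `Pₙ(-iA; x) = 0` forces `|xₙ| > 1`.
-/

open Complex Polynomial Finset

lemma Multiset.prod_map_lt_prod_map_of_nonneg {ι R : Type*} [CommSemiring R] [PartialOrder R]
    [IsStrictOrderedRing R] {s : Multiset ι} {f g : ι → R} (hs : s ≠ 0)
    (h0 : ∀ i ∈ s, 0 ≤ f i) (hfg : ∀ i ∈ s, f i < g i) :
    (s.map f).prod < (s.map g).prod := by
  classical
  obtain ⟨i, hi⟩ := Multiset.exists_mem_of_ne_zero hs
  have hrest : ∀ j ∈ s.erase i, 0 ≤ f j ∧ f j < g j := fun j hj =>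
    ⟨h0 j (Multiset.mem_of_mem_erase hj), hfg j (Multiset.mem_of_mem_erase hj)⟩
  rw [← Multiset.cons_erase hi, Multiset.map_cons, Multiset.map_cons, Multiset.prod_cons,
    Multiset.prod_cons]
  refine mul_lt_mul_of_lt_of_le_of_nonneg_of_pos (hfg i hi) ?_ (h0 i hi) ?_
  · exact Multiset.prod_map_le_prod_map₀ f g (fun j hj => (hrest j hj).1)
      fun j hj => (hrest j hj).2.le
  · exact Multiset.prod_pos fun y hy => by
      obtain ⟨j, hj, rfl⟩ := Multiset.mem_map.1 hy
      exact (hrest j hj).1.trans_lt (hrest j hj).2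

lemma Complex.norm_add_I_mul_lt_norm_sub_I_mul {w : ℂ} (hw : w.im < 0) {a : ℝ} (ha : 0 < a) :
    ‖w + I * a‖ < ‖w - I * a‖ := by
  rw [← sq_lt_sq₀ (norm_nonneg _) (norm_nonneg _), Complex.sq_norm, Complex.sq_norm,
    normSq_apply, normSq_apply]
  simp only [add_re, sub_re, add_im, sub_im, mul_re, mul_im, I_re, I_im, ofReal_re, ofReal_im]
  nlinarith

def AllRootsImNonneg (f : ℂ[X]) : Prop := ∀ z, f.eval z = 0 → 0 ≤ z.im

lemma norm_eval_add_I_mul_lt {f : ℂ[X]} (hf : AllRootsImNonneg f) (hd : 0 < f.natDegree)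
    {s : ℂ} (hs : s.im < 0) {a : ℝ} (ha : 0 < a) :
    ‖f.eval (s + I * a)‖ < ‖f.eval (s - I * a)‖ := by
  have hsplit : f.Splits := IsAlgClosed.splits f
  have hnorm (z : ℂ) :
      ‖f.eval z‖ = ‖f.leadingCoeff‖ * (f.roots.map (‖z - ·‖)).prod := by
    rw [hsplit.eval_eq_prod_roots, norm_mul,
      show ∀ m : Multiset ℂ, ‖m.prod‖ = (m.map (‖·‖)).prod from
        map_multiset_prod (normHom : ℂ →*₀ ℝ), Multiset.map_map]
    rfl
  have hroots : f.roots ≠ 0 := by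
    rw [← Multiset.card_pos, splits_iff_card_roots.1 hsplit]
    exact hd
  rw [hnorm, hnorm]
  refine mul_lt_mul_of_pos_left ?_ (norm_pos_iff.2 (leadingCoeff_ne_zero.2
    (ne_zero_of_natDegree_gt hd)))
  refine Multiset.prod_map_lt_prod_map_of_nonneg hroots (fun _ _ => norm_nonneg _) fun r hr => ?_
  have hr : (s - r).im < 0 := by
    have := hf r (isRoot_of_mem_roots hr)
    rw [sub_im]
    linarith
  simpa only [add_sub_right_comm, sub_right_comm] using
    Complex.norm_add_I_mul_lt_norm_sub_I_mul hr ha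

noncomputable def shiftComb (a : ℝ) (x : ℂ) (f : ℂ[X]) : ℂ[X] :=
  taylor (-(I * a)) f + C x * taylor (I * a) f

lemma eval_shiftComb (a : ℝ) (x : ℂ) (f : ℂ[X]) (s : ℂ) :
    (shiftComb a x f).eval s = f.eval (s - I * a) + x * f.eval (s + I * a) := by
  simp [shiftComb, taylor_eval, sub_eq_add_neg]

lemma one_lt_norm_of_eval_shiftComb_eq_zero {f : ℂ[X]} (hf : AllRootsImNonneg f)
    (hd : 0 < f.natDegree) {a : ℝ} (ha : 0 < a) {x s : ℂ} (hs : s.im < 0)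
    (h : (shiftComb a x f).eval s = 0) : 1 < ‖x‖ := by
  rw [eval_shiftComb, add_eq_zero_iff_eq_neg] at h
  by_contra! hx
  have hlt := norm_eval_add_I_mul_lt hf hd hs ha
  have hle : ‖f.eval (s - I * a)‖ ≤ ‖f.eval (s + I * a)‖ := by
    rw [h, norm_neg, norm_mul]
    exact mul_le_of_le_one_left (norm_nonneg _) hx
  exact hle.not_gt hlt

lemma allRootsImNonneg_shiftComb {f : ℂ[X]} (hf : AllRootsImNonneg f) (hd : 0 < f.natDegree)
    {a : ℝ} (ha : 0 < a) {x : ℂ} (hx : ‖x‖ ≤ 1) : AllRootsImNonneg (shiftComb a x f) :=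
  fun _ hz => le_of_not_gt fun hs =>
    (one_lt_norm_of_eval_shiftComb_eq_zero hf hd ha hs hz).not_ge hx

lemma coeff_taylor_natDegree_sub_one {R : Type*} [CommRing R] (f : R[X]) (r : R) :
    (taylor r f).coeff (f.natDegree - 1) =
      f.coeff (f.natDegree - 1) + f.natDegree * r * f.leadingCoeff := by
  have hdeg : (hasseDeriv (f.natDegree - 1) f).natDegree < 2 :=
    (natDegree_hasseDeriv_le f _).trans_lt (by omega)
  rw [taylor_coeff, eval_eq_sum_range' hdeg, sum_range_succ, sum_range_one,
    hasseDeriv_coeff, hasseDeriv_coeff]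
  rcases Nat.eq_zero_or_pos f.natDegree with h0 | hpos
  · simp [h0, coeff_eq_zero_of_natDegree_lt (show f.natDegree < 1 by omega)]
  · have h1 : 1 + (f.natDegree - 1) = f.natDegree := by omega
    rw [h1, ← Nat.choose_symm_of_eq_add h1.symm, Nat.choose_one_right, zero_add,
      Nat.choose_self, leadingCoeff]
    push_cast
    ring

lemma natDegree_le_natDegree_shiftComb_add_one {f : ℂ[X]} (hd : 0 < f.natDegree) {a : ℝ}
    (ha : a ≠ 0) (x : ℂ) : f.natDegree ≤ (shiftComb a x f).natDegree + 1 := by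
  have hlc : f.leadingCoeff ≠ 0 := leadingCoeff_ne_zero.2 (ne_zero_of_natDegree_gt hd)
  rcases eq_or_ne x (-1) with rfl | hx
  · -- the leading terms cancel, but the next ones do not
    have hcoeff : (shiftComb a (-1) f).coeff (f.natDegree - 1) ≠ 0 := by
      have hcancel : (shiftComb a (-1) f).coeff (f.natDegree - 1) =
          -2 * I * f.natDegree * f.leadingCoeff * a := by
        simp only [shiftComb, coeff_add, coeff_C_mul, coeff_taylor_natDegree_sub_one]
        ring
      rw [hcancel]
      refine mul_ne_zero (mul_ne_zero (mul_ne_zero ?_ ?_) hlc) (ofReal_ne_zero.2 ha)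
      · exact mul_ne_zero (by norm_num) I_ne_zero
      · exact Nat.cast_ne_zero.2 hd.ne'
    have := le_natDegree_of_ne_zero hcoeff
    omega
  · have hcoeff : (shiftComb a x f).coeff f.natDegree ≠ 0 := by
      simp only [shiftComb, coeff_add, coeff_C_mul, coeff_taylor_natDegree]
      rw [← one_add_mul]
      exact mul_ne_zero (fun h => hx (by linear_combination h)) hlc
    have := le_natDegree_of_ne_zero hcoeff
    omega

section multiShift

variable {ι : Type*} [DecidableEq ι]

/-- `(multiShift G a x univ).eval s` is `Pₙ(s; x)`. -/
noncomputable def multiShift (f : ℂ[X]) (a : ι → ℝ) (x : ι → ℂ) (U : Finset ι) : ℂ[X] :=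
  ∑ S ∈ U.powerset,
    C (∏ ℓ ∈ S, x ℓ) * taylor (I * (∑ ℓ ∈ S, (a ℓ : ℂ) - ∑ k ∈ U \ S, (a k : ℂ))) f

lemma multiShift_empty (f : ℂ[X]) (a : ι → ℝ) (x : ι → ℂ) : multiShift f a x ∅ = f := by
  simp [multiShift]

lemma multiShift_insert (f : ℂ[X]) (a : ι → ℝ) (x : ι → ℂ) {j : ι} {U : Finset ι}
    (hj : j ∉ U) :
    multiShift f a x (insert j U) = shiftComb (a j) (x j) (multiShift f a x U) := by
  rw [multiShift, sum_powerset_insert hj, shiftComb, multiShift, map_sum, map_sum, mul_sum]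
  congr 1 <;> refine sum_congr rfl fun S hS => ?_
  all_goals have hjS : j ∉ S := fun h => hj (mem_powerset.1 hS h)
  all_goals set c := ∑ ℓ ∈ S, (a ℓ : ℂ) - ∑ k ∈ U \ S, (a k : ℂ)
  · rw [insert_sdiff_of_notMem _ hjS, sum_insert fun h => hj (mem_sdiff.1 h).1, taylor_mul,
      taylor_C, taylor_taylor, show -(I * a j) + I * c = I * (∑ ℓ ∈ S, (a ℓ : ℂ) -
        (a j + ∑ k ∈ U \ S, (a k : ℂ))) by ring]
  · rw [insert_sdiff_insert, sdiff_insert_of_notMem hj, sum_insert hjS, prod_insert hjS,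
      taylor_mul, taylor_C, taylor_taylor, C_mul, show I * a j + I * c = I * (a j +
        ∑ ℓ ∈ S, (a ℓ : ℂ) - ∑ k ∈ U \ S, (a k : ℂ)) by ring]
    ring

lemma multiShift_allRootsImNonneg_and_natDegree {f : ℂ[X]} (hf : AllRootsImNonneg f)
    {a : ι → ℝ} {x : ι → ℂ} {U : Finset ι} (ha : ∀ k ∈ U, 0 < a k)
    (hx : ∀ k ∈ U, ‖x k‖ ≤ 1) (hU : #U < f.natDegree) :
    AllRootsImNonneg (multiShift f a x U) ∧
      f.natDegree ≤ (multiShift f a x U).natDegree + #U := by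
  induction U using Finset.induction with
  | empty => simpa [multiShift_empty] using hf
  | @insert j U hj ih =>
    rw [card_insert_of_notMem hj] at hU ⊢
    obtain ⟨hroots, hdeg⟩ := ih (fun k hk => ha k (mem_insert_of_mem hk))
      (fun k hk => hx k (mem_insert_of_mem hk)) (by omega)
    have hpos : 0 < (multiShift f a x U).natDegree := by omega
    have haj := ha j (mem_insert_self j U)
    rw [multiShift_insert f a x hj]
    refine ⟨allRootsImNonneg_shiftComb hroots hpos haj (hx j (mem_insert_self j U)), ?_⟩
    have := natDegree_le_natDegree_shiftComb_add_one hpos haj.ne' (x j)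
    omega

end multiShift

theorem Pn_key_proposition_neg (n : ℕ) (G : Polynomial ℝ)
    (hroots : ∀ z : ℂ, (G.map (algebraMap ℝ ℂ)).eval z = 0 → z.im = 0)
    (hdeg : n + 1 ≤ G.natDegree)
    (a : Fin (n + 1) → ℝ) (ha : ∀ k, 0 < a k)
    (A : ℝ) (hA : 0 < A)
    (x : Fin (n + 1) → ℂ)
    (hP : ∑ S : Finset (Fin (n + 1)),
        (G.map (algebraMap ℝ ℂ)).eval
          (-(I * A) - I * (∑ k ∈ Sᶜ, (a k : ℂ)) + I * (∑ ℓ ∈ S, (a ℓ : ℂ)))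
        * ∏ ℓ ∈ S, x ℓ = 0)
    (hx : ∀ k : Fin n, ‖x k.castSucc‖ ≤ 1) :
    1 < ‖x (Fin.last n)‖ := by
  set Gc := G.map (algebraMap ℝ ℂ)
  set U := univ.erase (Fin.last n)
  have hxU : ∀ k ∈ U, ‖x k‖ ≤ 1 := fun k hk => by
    obtain ⟨j, rfl⟩ := Fin.eq_castSucc_of_ne_last (ne_of_mem_erase hk)
    exact hx j
  have hU : #U = n := by simp [U]
  obtain ⟨hUroots, hUdeg⟩ := multiShift_allRootsImNonneg_and_natDegree
    (fun z hz => (hroots z hz).ge) (fun k _ => ha k) hxU (by rw [hU, natDegree_map]; omega)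
  rw [hU, natDegree_map] at hUdeg
  have hPn :
      (shiftComb (a (Fin.last n)) (x (Fin.last n)) (multiShift Gc a x U)).eval (-(I * A)) = 0 := by
    rw [← multiShift_insert Gc a x (notMem_erase _ _), insert_erase (mem_univ _), ← hP,
      multiShift, eval_finsetSum, powerset_univ]
    refine sum_congr rfl fun S _ => ?_
    rw [eval_mul, eval_C, taylor_eval, mul_comm, compl_eq_univ_sdiff]
    congr 2
    ring
  exact one_lt_norm_of_eval_shiftComb_eq_zero hUroots (by omega) (ha _) (by simpa using hA) hPn
end

section
/- Let G be a real polynomial with only real zeros and deg G ≥ n ≥ 1, A > 0, a₁,…,aₙ > 0, and ω₁,…,ωₙ Hermite-Biehler polynomials. Define Hₙ(s, z) = Σ_{S⊆{1,…,n}} G(s - Σ_{k∉S} iaₖ + Σ_{ℓ∈S} ia_ℓ) Π_{k∉S} ωₖ*(z) Π_{ℓ∈S} ω_ℓ(z). Then: (i) every zero z of z ↦ Hₙ(iA, z) satisfies Im z > 0; (ii) every zero of z ↦ Hₙ(-iA, z) satisfies Im z < 0; (iii) every zero of z ↦ Hₙ(0, z) is real. -/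
/-!
Dividing by `∏ ωₖ(z)` turns `Hₙ(s, z)` into `Σ_S G(s - Σ_{S'} i aₖ + Σ_S i aₖ) ∏_{S'} uₖ` with
`uₖ = ωₖ*(z) / ωₖ(z)`, which is what one gets from `G` by applying the operators
`f ↦ f(· + i aₖ) + uₖ f(· - i aₖ)` one index at a time and evaluating at `s`. For `Im z ≤ 0` the
Hermite-Biehler property gives `|uₖ| ≤ 1` (and `< 1` if `Im z < 0`). Since
`|f(w - ib)| ≤ |f(w + ib)|` for `Im w ≥ 0` when the roots of `f` lie in the closed lower
half-plane, each operator preserves that property (for nonconstant `f`), and pushes the roots into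
the open lower half-plane when `|u| < 1`. This gives `Hₙ(iA, z) ≠ 0` for `Im z ≤ 0` and
`Hₙ(0, z) ≠ 0` for `Im z < 0`; the remaining cases follow from
`Hₙ(conj s, z) = conj Hₙ(s, conj z)`, valid because `G` is real.
-/

open Complex Polynomial Finset ComplexConjugate

lemma norm_sub_I_mul_sub_le {w r : ℂ} {b : ℝ} (hb : 0 ≤ b) (h : r.im ≤ w.im) :
    ‖w - I * b - r‖ ≤ ‖w + I * b - r‖ := by
  rw [← sq_le_sq₀ (norm_nonneg _) (norm_nonneg _), Complex.sq_norm, Complex.sq_norm,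
    normSq_apply, normSq_apply]
  simp only [sub_re, add_re, mul_re, sub_im, add_im, mul_im, I_re, I_im, ofReal_re, ofReal_im]
  nlinarith

lemma norm_sub_I_mul_sub_lt {w r : ℂ} {b : ℝ} (hb : 0 < b) (h : r.im < w.im) :
    ‖w - I * b - r‖ < ‖w + I * b - r‖ := by
  rw [← sq_lt_sq₀ (norm_nonneg _) (norm_nonneg _), Complex.sq_norm, Complex.sq_norm,
    normSq_apply, normSq_apply]
  simp only [sub_re, add_re, mul_re, sub_im, add_im, mul_im, I_re, I_im, ofReal_re, ofReal_im]
  nlinarith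

namespace Polynomial

section ShiftComb

variable {R : Type*} [CommRing R]

noncomputable def shiftComb (c u : R) (f : R[X]) : R[X] :=
  taylor c f + C u * taylor (-c) f

lemma eval_shiftComb (c u : R) (f : R[X]) (w : R) :
    (shiftComb c u f).eval w = f.eval (w + c) + u * f.eval (w - c) := by
  simp [shiftComb, taylor_eval, sub_eq_add_neg]

lemma coeff_shiftComb (c u : R) (f : R[X]) (k : ℕ) :
    (shiftComb c u f).coeff k = (hasseDeriv k f).eval c + u * (hasseDeriv k f).eval (-c) := by
  simp [shiftComb, taylor_coeff]

/-- For `u = -1` the leading coefficients cancel, but the next one is `2 d c lc f ≠ 0`. -/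
lemma natDegree_le_natDegree_shiftComb_add_one [IsDomain R] [CharZero R] {c : R} (hc : c ≠ 0)
    (u : R) (f : R[X]) : f.natDegree ≤ (shiftComb c u f).natDegree + 1 := by
  rcases eq_or_ne f 0 with rfl | hf
  · simp
  have hlc : f.leadingCoeff ≠ 0 := leadingCoeff_ne_zero.2 hf
  rcases eq_or_ne u (-1) with rfl | hu
  · obtain hd | hd := Nat.eq_zero_or_pos f.natDegree
    · omega
    set g := hasseDeriv (f.natDegree - 1) f with hg
    have hg_deg : g.natDegree ≤ 1 := (natDegree_hasseDeriv_le f _).trans (by omega)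
    have hg1 : g.coeff 1 = f.natDegree * f.leadingCoeff := by
      rw [hg, hasseDeriv_coeff, Nat.add_sub_cancel' hd, Nat.choose_symm hd, Nat.choose_one_right,
        leadingCoeff]
    have hcoeff : (shiftComb c (-1) f).coeff (f.natDegree - 1)
        = 2 * c * (f.natDegree * f.leadingCoeff) := by
      rw [coeff_shiftComb, ← hg, eq_X_add_C_of_natDegree_le_one hg_deg, hg1]
      simp only [eval_add, eval_mul, eval_C, eval_X]
      ring
    have hne : (shiftComb c (-1) f).coeff (f.natDegree - 1) ≠ 0 := by
      rw [hcoeff]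
      exact mul_ne_zero (mul_ne_zero two_ne_zero hc) (mul_ne_zero (by exact_mod_cast hd.ne') hlc)
    have := le_natDegree_of_ne_zero hne
    omega
  · have hcoeff : (shiftComb c u f).coeff f.natDegree = (1 + u) * f.leadingCoeff := by
      rw [coeff_shiftComb, hasseDeriv_natDegree_eq_C]
      simp only [eval_C]
      ring
    have hne : (shiftComb c u f).coeff f.natDegree ≠ 0 := by
      rw [hcoeff]
      exact mul_ne_zero (fun h => hu (by linear_combination h)) hlc
    have := le_natDegree_of_ne_zero hne
    omega

end ShiftComb

section ShiftSum

variable {R ι : Type*} [CommRing R] [DecidableEq ι]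

noncomputable def shiftSum (K : Finset ι) (f : R[X]) (c u : ι → R) (s : R) : R :=
  ∑ S ∈ K.powerset, f.eval (s - ∑ k ∈ K \ S, c k + ∑ k ∈ S, c k) * ∏ k ∈ K \ S, u k

@[simp]
lemma shiftSum_empty (f : R[X]) (c u : ι → R) (s : R) : shiftSum ∅ f c u s = f.eval s := by
  simp [shiftSum]

lemma shiftSum_insert {j : ι} {K : Finset ι} (hj : j ∉ K) (f : R[X]) (c u : ι → R) (s : R) :
    shiftSum (insert j K) f c u s = shiftSum K (shiftComb (c j) (u j) f) c u s := by
  rw [shiftSum, sum_powerset_insert hj, ← sum_add_distrib, shiftSum]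
  refine sum_congr rfl fun S hS => ?_
  have hjS : j ∉ S := fun h => hj (mem_powerset.1 hS h)
  rw [insert_sdiff_of_notMem _ hjS, insert_sdiff_insert, sdiff_insert_of_notMem hj,
    sum_insert (fun h => hj (mem_sdiff.1 h).1), prod_insert (fun h => hj (mem_sdiff.1 h).1),
    sum_insert hjS, eval_shiftComb]
  ring_nf

end ShiftSum

lemma norm_eval_eq_mul_prod_roots (f : ℂ[X]) (v : ℂ) :
    ‖f.eval v‖ = ‖f.leadingCoeff‖ * (f.roots.map fun r => ‖v - r‖).prod := by
  rw [(IsAlgClosed.splits f).eval_eq_prod_roots, norm_mul, ← normHom_apply (_ : Multiset ℂ).prod,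
    map_multiset_prod, Multiset.map_map]
  rfl

/-- Every factor `‖w - r‖` of `f` grows when `w` moves up, as `r` lies below `w`. -/
lemma norm_eval_sub_I_mul_le {f : ℂ[X]} (hf : ∀ r, f.IsRoot r → r.im ≤ 0) {w : ℂ}
    (hw : 0 ≤ w.im) {b : ℝ} (hb : 0 ≤ b) : ‖f.eval (w - I * b)‖ ≤ ‖f.eval (w + I * b)‖ := by
  rw [norm_eval_eq_mul_prod_roots, norm_eval_eq_mul_prod_roots]
  gcongr
  refine Multiset.prod_map_le_prod_map₀ _ _ (fun _ _ => norm_nonneg _) fun r hr => ?_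
  exact norm_sub_I_mul_sub_le hb ((hf r (isRoot_of_mem_roots hr)).trans hw)

lemma norm_eval_sub_I_mul_lt {f : ℂ[X]} (hd : 0 < f.natDegree)
    (hf : ∀ r, f.IsRoot r → r.im ≤ 0) {w : ℂ} (hw : 0 < w.im) {b : ℝ} (hb : 0 < b) :
    ‖f.eval (w - I * b)‖ < ‖f.eval (w + I * b)‖ := by
  obtain ⟨r₀, hr₀⟩ := IsAlgClosed.exists_root f (natDegree_pos_iff_degree_pos.1 hd).ne'
  obtain ⟨g, rfl⟩ := dvd_iff_isRoot.2 hr₀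
  have hg : ∀ r, g.IsRoot r → r.im ≤ 0 := fun r hr => hf r (by simp [hr.eq_zero])
  have hg_ne : g.eval (w + I * b) ≠ 0 := fun h => by
    have := hg _ h
    simp only [add_im, mul_im, I_re, I_im, ofReal_re, ofReal_im] at this
    linarith
  simp only [eval_mul, eval_sub, eval_X, eval_C, norm_mul]
  calc ‖w - I * b - r₀‖ * ‖g.eval (w - I * b)‖
      ≤ ‖w - I * b - r₀‖ * ‖g.eval (w + I * b)‖ := by
        gcongr; exact norm_eval_sub_I_mul_le hg hw.le hb.le
    _ < ‖w + I * b - r₀‖ * ‖g.eval (w + I * b)‖ := by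
        have := norm_pos_iff.2 hg_ne
        gcongr
        exact norm_sub_I_mul_sub_lt hb ((hf r₀ hr₀).trans_lt hw)

section RootsInLowerHalfPlane

variable {f : ℂ[X]} {b : ℝ} {u : ℂ}

lemma im_nonpos_of_isRoot_shiftComb (hd : 0 < f.natDegree) (hf : ∀ r, f.IsRoot r → r.im ≤ 0)
    (hb : 0 < b) (hu : ‖u‖ ≤ 1) : ∀ r, (shiftComb (I * b) u f).IsRoot r → r.im ≤ 0 := by
  intro ρ hρ
  by_contra! hρ_im
  have hroot : f.eval (ρ + I * b) = -(u * f.eval (ρ - I * b)) := by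
    rw [IsRoot, eval_shiftComb] at hρ
    linear_combination hρ
  have hlt := norm_eval_sub_I_mul_lt hd hf hρ_im hb
  rw [hroot, norm_neg, norm_mul] at hlt
  exact (mul_le_of_le_one_left (norm_nonneg _) hu).not_gt hlt

lemma im_neg_of_isRoot_shiftComb (hf : ∀ r, f.IsRoot r → r.im ≤ 0) (hb : 0 < b) (hu : ‖u‖ < 1) :
    ∀ r, (shiftComb (I * b) u f).IsRoot r → r.im < 0 := by
  intro ρ hρ
  by_contra! hρ_im
  have hne : f.eval (ρ + I * b) ≠ 0 := fun h => by
    have := hf _ h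
    simp only [add_im, mul_im, I_re, I_im, ofReal_re, ofReal_im] at this
    linarith
  have hroot : f.eval (ρ + I * b) = -(u * f.eval (ρ - I * b)) := by
    rw [IsRoot, eval_shiftComb] at hρ
    linear_combination hρ
  have hle := norm_eval_sub_I_mul_le hf hρ_im hb.le
  have hlt : ‖u‖ * ‖f.eval (ρ + I * b)‖ < ‖f.eval (ρ + I * b)‖ :=
    mul_lt_of_lt_one_left (norm_pos_iff.2 hne) hu
  rw [hroot, norm_neg, norm_mul] at hlt hle
  nlinarith [norm_nonneg u]

end RootsInLowerHalfPlane

section ShiftSumNeZero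

variable {ι : Type*} [DecidableEq ι] {a : ι → ℝ} {u : ι → ℂ} {s : ℂ}

/-- The bound on `#K` keeps every intermediate polynomial nonconstant, as
`im_nonpos_of_isRoot_shiftComb` requires. -/
lemma shiftSum_ne_zero_of_card_le (ha : ∀ k, 0 < a k) (hu : ∀ k, ‖u k‖ ≤ 1) (hs : 0 < s.im)
    (K : Finset ι) {f : ℂ[X]} (hf : ∀ r, f.IsRoot r → r.im ≤ 0) (hK : #K ≤ f.natDegree) :
    shiftSum K f (fun k => I * a k) u s ≠ 0 := by
  induction K using Finset.induction_on generalizing f with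
  | empty => exact fun h => (hf s (by simpa using h)).not_gt hs
  | insert j K hj ih =>
    rw [card_insert_of_notMem hj] at hK
    have hc : I * (a j : ℂ) ≠ 0 := mul_ne_zero I_ne_zero (ofReal_ne_zero.2 (ha j).ne')
    rw [shiftSum_insert hj]
    exact ih (im_nonpos_of_isRoot_shiftComb (by omega) hf (ha j) (hu j))
      (by have := natDegree_le_natDegree_shiftComb_add_one hc (u j) f; omega)

lemma shiftSum_ne_zero_of_im_neg (ha : ∀ k, 0 < a k) (hu : ∀ k, ‖u k‖ < 1) (hs : 0 ≤ s.im)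
    (K : Finset ι) {f : ℂ[X]} (hf : ∀ r, f.IsRoot r → r.im < 0) :
    shiftSum K f (fun k => I * a k) u s ≠ 0 := by
  induction K using Finset.induction_on generalizing f with
  | empty => exact fun h => (hf s (by simpa using h)).not_ge hs
  | insert j K hj ih =>
    rw [shiftSum_insert hj]
    exact ih (im_neg_of_isRoot_shiftComb (fun r hr => (hf r hr).le) (ha j) (hu j))

lemma shiftSum_ne_zero_of_nonempty (ha : ∀ k, 0 < a k) (hu : ∀ k, ‖u k‖ < 1) (hs : 0 ≤ s.im)
    {K : Finset ι} (hK : K.Nonempty) {f : ℂ[X]} (hf : ∀ r, f.IsRoot r → r.im ≤ 0) :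
    shiftSum K f (fun k => I * a k) u s ≠ 0 := by
  obtain ⟨j, hj⟩ := hK
  rw [← insert_erase hj, shiftSum_insert (notMem_erase j K)]
  exact shiftSum_ne_zero_of_im_neg ha hu hs _ (im_neg_of_isRoot_shiftComb hf (ha j) (hu j))

end ShiftSumNeZero

end Polynomial

structure IsHermiteBiehler (ω : ℂ[X]) : Prop where
  im_pos_of_isRoot : ∀ z, ω.IsRoot z → 0 < z.im
  norm_lt : ∀ z, 0 < z.im → ‖ω.eval z‖ < ‖conj (ω.eval (conj z))‖

namespace IsHermiteBiehler

variable {ω : ℂ[X]} {z : ℂ}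

lemma eval_ne_zero (hω : IsHermiteBiehler ω) (hz : z.im ≤ 0) : ω.eval z ≠ 0 :=
  fun h => (hω.im_pos_of_isRoot z h).not_ge hz

lemma norm_conj_div_lt_one (hω : IsHermiteBiehler ω) (hz : z.im < 0) :
    ‖conj (ω.eval (conj z)) / ω.eval z‖ < 1 := by
  have := hω.norm_lt (conj z) (by simpa using hz)
  rw [conj_conj, norm_conj] at this
  rw [norm_div, norm_conj, div_lt_one (norm_pos_iff.2 (hω.eval_ne_zero hz.le))]
  exact this

lemma norm_conj_div_le_one (hω : IsHermiteBiehler ω) (hz : z.im ≤ 0) :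
    ‖conj (ω.eval (conj z)) / ω.eval z‖ ≤ 1 := by
  rcases hz.lt_or_eq with hz | hz
  · exact (hω.norm_conj_div_lt_one hz).le
  · rw [conj_eq_iff_im.2 hz, norm_div, norm_conj,
      div_self (norm_ne_zero_iff.2 (hω.eval_ne_zero hz.le))]

end IsHermiteBiehler

section HermiteBiehlerSum

variable {ι : Type*} [Fintype ι] [DecidableEq ι] {F : ℂ[X]} {a : ι → ℝ} {ω : ι → ℂ[X]}

noncomputable def hermiteBiehlerSum (F : ℂ[X]) (a : ι → ℝ) (ω : ι → ℂ[X]) (s z : ℂ) : ℂ :=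
  ∑ S : Finset ι, F.eval (s - I * (∑ k ∈ Sᶜ, (a k : ℂ)) + I * (∑ ℓ ∈ S, (a ℓ : ℂ)))
    * (∏ k ∈ Sᶜ, conj ((ω k).eval (conj z))) * (∏ ℓ ∈ S, (ω ℓ).eval z)

lemma hermiteBiehlerSum_eq_prod_mul_shiftSum {s z : ℂ} (hz : ∀ k, (ω k).eval z ≠ 0) :
    hermiteBiehlerSum F a ω s z = (∏ k, (ω k).eval z) *
      shiftSum univ F (fun k => I * a k)
        (fun k => conj ((ω k).eval (conj z)) / (ω k).eval z) s := by
  rw [hermiteBiehlerSum, shiftSum, powerset_univ, mul_sum]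
  refine sum_congr rfl fun S _ => ?_
  have hS : ∏ k ∈ Sᶜ, (ω k).eval z ≠ 0 := prod_ne_zero_iff.2 fun k _ => hz k
  rw [← compl_eq_univ_sdiff, ← mul_sum, ← mul_sum, prod_div_distrib, ← prod_mul_prod_compl S]
  field_simp

/-- The substitution `S ↦ Sᶜ` exchanges the two kinds of shifts. -/
lemma hermiteBiehlerSum_conj (hF : ∀ w, F.eval (conj w) = conj (F.eval w)) (s z : ℂ) :
    hermiteBiehlerSum F a ω (conj s) z = conj (hermiteBiehlerSum F a ω s (conj z)) := by
  rw [hermiteBiehlerSum, hermiteBiehlerSum, map_sum]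
  refine (Fintype.sum_bijective compl compl_involutive.bijective _ _ fun S => ?_).symm
  simp only [map_mul, map_prod, ← hF, conj_conj, compl_compl, map_add, map_sub, map_sum,
    conj_ofReal, conj_I]
  ring_nf

lemma hermiteBiehlerSum_ne_zero_of_im_pos (hω : ∀ k, IsHermiteBiehler (ω k))
    (hF : ∀ r, F.IsRoot r → r.im ≤ 0) (hdeg : Fintype.card ι ≤ F.natDegree) (ha : ∀ k, 0 < a k)
    {s z : ℂ} (hs : 0 < s.im) (hz : z.im ≤ 0) : hermiteBiehlerSum F a ω s z ≠ 0 := by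
  have hω_ne k := (hω k).eval_ne_zero hz
  rw [hermiteBiehlerSum_eq_prod_mul_shiftSum hω_ne]
  exact mul_ne_zero (prod_ne_zero_iff.2 fun k _ => hω_ne k)
    (shiftSum_ne_zero_of_card_le ha (fun k => (hω k).norm_conj_div_le_one hz) hs univ hF hdeg)

lemma hermiteBiehlerSum_ne_zero_of_im_neg [Nonempty ι] (hω : ∀ k, IsHermiteBiehler (ω k))
    (hF : ∀ r, F.IsRoot r → r.im ≤ 0) (ha : ∀ k, 0 < a k)
    {s z : ℂ} (hs : 0 ≤ s.im) (hz : z.im < 0) : hermiteBiehlerSum F a ω s z ≠ 0 := by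
  have hω_ne k := (hω k).eval_ne_zero hz.le
  rw [hermiteBiehlerSum_eq_prod_mul_shiftSum hω_ne]
  exact mul_ne_zero (prod_ne_zero_iff.2 fun k _ => hω_ne k)
    (shiftSum_ne_zero_of_nonempty ha (fun k => (hω k).norm_conj_div_lt_one hz) hs
      univ_nonempty hF)

end HermiteBiehlerSum

theorem Hn_shifted_zero_locations (n : ℕ) (hn : 1 ≤ n) (G : Polynomial ℝ)
    (hroots : ∀ z : ℂ, (G.map (algebraMap ℝ ℂ)).eval z = 0 → z.im = 0)
    (hdeg : n ≤ G.natDegree)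
    (A : ℝ) (hA : 0 < A)
    (a : Fin n → ℝ) (ha : ∀ k, 0 < a k)
    (ω : Fin n → Polynomial ℂ)
    (hHBzeros : ∀ k, ∀ z : ℂ, (ω k).eval z = 0 → 0 < z.im)
    (hHBineq : ∀ k, ∀ z : ℂ, 0 < z.im →
      ‖(ω k).eval z‖
        < ‖starRingEnd ℂ ((ω k).eval (starRingEnd ℂ z))‖) :
    let H : ℂ → ℂ → ℂ := fun s z => ∑ S : Finset (Fin n),
        (G.map (algebraMap ℝ ℂ)).eval
          (s - I * (∑ k ∈ Sᶜ, (a k : ℂ)) + I * (∑ ℓ ∈ S, (a ℓ : ℂ)))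
        * (∏ k ∈ Sᶜ, starRingEnd ℂ ((ω k).eval (starRingEnd ℂ z)))
        * (∏ ℓ ∈ S, (ω ℓ).eval z)
    (∀ z : ℂ, H (I * A) z = 0 → 0 < z.im) ∧
    (∀ z : ℂ, H (-(I * A)) z = 0 → z.im < 0) ∧
    (∀ z : ℂ, H 0 z = 0 → z.im = 0) := by
  intro H
  set F := G.map (algebraMap ℝ ℂ)
  rw [show H = hermiteBiehlerSum F a ω from rfl]
  have hω k : IsHermiteBiehler (ω k) := ⟨hHBzeros k, hHBineq k⟩
  have hF r (hr : F.IsRoot r) : r.im ≤ 0 := (hroots r hr).le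
  have hF_conj w : F.eval (conj w) = conj (F.eval w) := by
    simp only [F, eval_map_algebraMap, aeval_conj]
  have hF_deg : Fintype.card (Fin n) ≤ F.natDegree := by simpa [F] using hdeg
  have : Nonempty (Fin n) := ⟨⟨0, hn⟩⟩
  have upper z (hz : hermiteBiehlerSum F a ω (I * A) z = 0) : 0 < z.im := by
    by_contra! h
    exact hermiteBiehlerSum_ne_zero_of_im_pos hω hF hF_deg ha (by simpa using hA) h hz
  have lower z (hz : z.im < 0) : hermiteBiehlerSum F a ω 0 z ≠ 0 :=
    hermiteBiehlerSum_ne_zero_of_im_neg hω hF ha le_rfl hz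
  have conj_eq_zero s z :
      hermiteBiehlerSum F a ω (conj s) z = 0 ↔ hermiteBiehlerSum F a ω s (conj z) = 0 := by
    rw [hermiteBiehlerSum_conj hF_conj, map_eq_zero]
  refine ⟨upper, fun z hz => ?_, fun z hz => ?_⟩
  · simpa using upper (conj z) ((conj_eq_zero _ z).1 (by simpa using hz))
  · rcases lt_trichotomy z.im 0 with h | h | h
    · exact absurd hz (lower z h)
    · exact h
    · exact absurd ((conj_eq_zero 0 z).1 (by simpa using hz))
        (lower (conj z) (by simpa using h))
end
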